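/- arXiv:math/0110327 — 3 statements merged into one kernel-verified Lean document; each statement's English description precedes it below -/
import Mathlib

section
/- Let c := e/(e-1), p a real number with p > 1, m an integer with m ≥ 2, n a positive integer, and t_1,...,t_n, r_1,...,r_n positive reals. If Σ_{i=1}^n (r_i·t_i - (m-1)·log_p(t_i)) ≤ (m-1)·Σ_{i=1}^n r_i, then Σ_{i=1}^n r_i·t_i ≤ c·(m-1)·[Σ_{i=1}^n r_i + log_p((m-1)^n / (r_1···r_n · (log p)^n))]. -/
/-!
For `k, c > 0` the tangent-line bound `log y ≤ y - 1` at `y = c x / k` gives the Young-type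
inequality `k log x ≤ c x + k (log (k / c) - 1)`. Applied termwise with `k = (m-1) / log p` and
`c = rᵢ / e`, it bounds `(m-1) ∑ log_p tᵢ` by `S / e + (m-1) ∑ log_p ((m-1) / (rᵢ log p))`, where
`S = ∑ rᵢ tᵢ`. Together with the hypothesis this gives `S (1 - 1/e) ≤ (m-1) (∑ rᵢ + log_p (…))`.
-/

open Real Finset

theorem mul_log_le_mul_add_mul_log_div_sub_one {k c x : ℝ} (hk : 0 < k) (hc : 0 < c)
    (hx : 0 < x) : k * log x ≤ c * x + k * (log (k / c) - 1) := by
  have htangent : log (c * x / k) ≤ c * x / k - 1 := log_le_sub_one_of_pos (by positivity)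
  have hsplit : log (c * x / k) = log x - log (k / c) := by
    rw [log_div (by positivity) hk.ne', log_mul hc.ne' hx.ne', log_div hk.ne' hc.ne']
    ring
  have hscaled := mul_le_mul_of_nonneg_left (hsplit ▸ htangent) hk.le
  calc k * log x = k * (log x - log (k / c)) + k * log (k / c) := by ring
    _ ≤ k * (c * x / k - 1) + k * log (k / c) := by linarith
    _ = c * x + k * (log (k / c) - 1) := by field_simp; ring

theorem mul_logb_le_div_exp_one_add_mul_logb {p M r t : ℝ} (hp : 1 < p) (hM : 0 < M)
    (hr : 0 < r) (ht : 0 < t) :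
    M * logb p t ≤ r * t / exp 1 + M * logb p (M / (r * log p)) := by
  have hL : 0 < log p := log_pos hp
  have hyoung := mul_log_le_mul_add_mul_log_div_sub_one (div_pos hM hL)
    (div_pos hr (exp_pos 1)) ht
  have hshift : log (M / log p / (r / exp 1)) - 1 = log (M / (r * log p)) := by
    rw [show M / log p / (r / exp 1) = exp 1 * (M / (r * log p)) by field_simp,
      log_mul (exp_pos 1).ne' (by positivity), log_exp]
    ring
  rw [hshift] at hyoung
  simp only [logb]
  calc M * (log t / log p) = M / log p * log t := by ring
    _ ≤ r / exp 1 * t + M / log p * log (M / (r * log p)) := hyoung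
    _ = r * t / exp 1 + M * (log (M / (r * log p)) / log p) := by ring

theorem logb_pow_card_div_prod_mul_pow_card {ι : Type*} (s : Finset ι) (p M L : ℝ) (r : ι → ℝ)
    (hM : M ≠ 0) (hL : L ≠ 0) (hr : ∀ i ∈ s, r i ≠ 0) :
    logb p (M ^ #s / ((∏ i ∈ s, r i) * L ^ #s)) = ∑ i ∈ s, logb p (M / (r i * L)) := by
  have hprod : M ^ #s / ((∏ i ∈ s, r i) * L ^ #s) = ∏ i ∈ s, M / (r i * L) := by
    rw [prod_div_distrib, prod_const, prod_mul_distrib, prod_const]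
  rw [hprod, logb_prod]
  intro i hi
  exact div_ne_zero hM (mul_ne_zero (hr i hi) hL)

theorem le_div_sub_one_mul_of_le_add_div {E S A : ℝ} (hE : 1 < E) (h : S ≤ A + S / E) :
    S ≤ E / (E - 1) * A := by
  have hE0 : 0 < E := by linarith
  rw [div_mul_eq_mul_div, le_div_iff₀ (by linarith)]
  have := mul_le_mul_of_nonneg_right h hE0.le
  rw [add_mul, div_mul_cancel₀ S hE0.ne'] at this
  linarith

theorem stmt1_general (n : ℕ) (p : ℝ) (hp : 1 < p) (m : ℤ) (hm : 2 ≤ m)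
    (t r : Fin n → ℝ) (ht : ∀ i, 0 < t i) (hr : ∀ i, 0 < r i)
    (h : ∑ i, (r i * t i - ((m : ℝ) - 1) * Real.logb p (t i)) ≤ ((m : ℝ) - 1) * ∑ i, r i) :
    ∑ i, r i * t i ≤ (Real.exp 1 / (Real.exp 1 - 1)) * ((m : ℝ) - 1) *
      ((∑ i, r i) +
        Real.logb p (((m : ℝ) - 1) ^ n / ((∏ i, r i) * (Real.log p) ^ n))) := by
  set M : ℝ := (m : ℝ) - 1
  have hM : 0 < M := by
    have : (2 : ℝ) ≤ m := by exact_mod_cast hm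
    linarith
  have hlogb_sum : ∑ i, M * logb p (t i) ≤
      (∑ i, r i * t i) / exp 1 + M * ∑ i, logb p (M / (r i * log p)) := by
    rw [sum_div, mul_sum, ← sum_add_distrib]
    exact sum_le_sum fun i _ => mul_logb_le_div_exp_one_add_mul_logb hp hM (hr i) (ht i)
  have hlogb_prod := logb_pow_card_div_prod_mul_pow_card univ p M (log p) r hM.ne'
    (log_pos hp).ne' fun i _ => (hr i).ne'
  rw [card_fin] at hlogb_prod
  rw [hlogb_prod, mul_assoc, mul_add]
  rw [sum_sub_distrib] at h
  exact le_div_sub_one_mul_of_le_add_div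
    (by linarith [add_one_lt_exp (one_ne_zero (α := ℝ))]) (by linarith)

/-- The multivariate inequality (Lemma on `(⋆⋆) ⇒ (⋆⋆⋆)` contrapositive):
if `∑ (rᵢtᵢ - (m-1)·log_p tᵢ) ≤ (m-1)·∑ rᵢ` then
`∑ rᵢtᵢ ≤ c(m-1)[∑ rᵢ + log_p((m-1)^n / (r₁⋯rₙ (log p)^n))]` with `c = e/(e-1)`. -/
theorem stmt1 (n : ℕ) (hn : 0 < n) (p : ℝ) (hp : 1 < p) (m : ℤ) (hm : 2 ≤ m)
    (t r : Fin n → ℝ) (ht : ∀ i, 0 < t i) (hr : ∀ i, 0 < r i)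
    (h : ∑ i, (r i * t i - ((m : ℝ) - 1) * Real.logb p (t i)) ≤ ((m : ℝ) - 1) * ∑ i, r i) :
    ∑ i, r i * t i ≤ (Real.exp 1 / (Real.exp 1 - 1)) * ((m : ℝ) - 1) *
      ((∑ i, r i) +
        Real.logb p (((m : ℝ) - 1) ^ n / ((∏ i, r i) * (Real.log p) ^ n))) :=
  stmt1_general n p hp m hm t r ht hr h
end

section
/- Let r, t > 0 be real, p > 1 real, m ≥ 2 an integer, and c := e/(e-1). Then r·t ≥ (m-1)·log_p(t) - (m-1)·log_p((m-1)/(r·log p)) + r·t/c. -/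
/-- Single-variable inequality `(⋆)` with `n = 1`:
`r·t ≥ (m-1)·log_p t - (m-1)·log_p((m-1)/(r log p)) + r·t/c`, `c = e/(e-1)`. -/
theorem stmt2 (p r t : ℝ) (hp : 1 < p) (hr : 0 < r) (ht : 0 < t) (m : ℤ) (hm : 2 ≤ m) :
    ((m : ℝ) - 1) * Real.logb p t
      - ((m : ℝ) - 1) * Real.logb p (((m : ℝ) - 1) / (r * Real.log p))
      + r * t / (Real.exp 1 / (Real.exp 1 - 1)) ≤ r * t := by
  have hL : 0 < Real.log p := Real.log_pos hp
  have ha0 : (0:ℝ) < (m:ℝ) - 1 := by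
    have : (2:ℝ) ≤ (m:ℝ) := by exact_mod_cast hm
    linarith
  set a : ℝ := (m:ℝ) - 1 with ha_def
  set u : ℝ := t * r * Real.log p / a with hu_def
  have hu : 0 < u := by positivity
  have he0 : (0:ℝ) < Real.exp 1 := Real.exp_pos 1
  have he1 : (1:ℝ) < Real.exp 1 := by
    nlinarith [Real.add_one_le_exp (1:ℝ)]
  have hlog : Real.log u ≤ u / Real.exp 1 := by
    have h := Real.log_le_sub_one_of_pos (show 0 < u / Real.exp 1 by positivity)
    have he : Real.log (u / Real.exp 1) = Real.log u - 1 := by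
      rw [Real.log_div (ne_of_gt hu) (Real.exp_ne_zero 1), Real.log_exp]
    rw [he] at h
    linarith
  have hsplit : Real.logb p t - Real.logb p (a / (r * Real.log p))
      = Real.log u / Real.log p := by
    unfold Real.logb
    rw [hu_def, Real.log_div (by positivity) (ne_of_gt ha0),
      Real.log_div (ne_of_gt ha0) (by positivity),
      Real.log_mul (show (t*r:ℝ) ≠ 0 by positivity) (ne_of_gt hL),
      Real.log_mul (show (r:ℝ) ≠ 0 by positivity) (ne_of_gt hL),
      Real.log_mul (ne_of_gt ht) (ne_of_gt hr)]
    ring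
  have hau : a * u = t * r * Real.log p := by
    rw [hu_def]; field_simp
  have key : a * Real.log u / Real.log p ≤ r * t / Real.exp 1 := by
    rw [div_le_div_iff₀ hL he0]
    have h2 : a * Real.log u ≤ a * (u / Real.exp 1) :=
      mul_le_mul_of_nonneg_left hlog (le_of_lt ha0)
    have h3 : a * (u / Real.exp 1) * Real.exp 1 = a * u := by field_simp
    nlinarith [mul_le_mul_of_nonneg_right h2 (le_of_lt he0)]
  have hc : r * t / (Real.exp 1 / (Real.exp 1 - 1)) = r * t - r * t / Real.exp 1 := by
    field_simp
  have hgoal : a * Real.logb p t - a * Real.logb p (a / (r * Real.log p))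
      = a * Real.log u / Real.log p := by
    rw [mul_div_assoc, ← hsplit]; ring
  rw [hgoal, hc]
  linarith
end

section
/- The polynomial 3x^{10} + x^2 - 4 has exactly 6 roots in ℚ_2 \ {0} (counted without multiplicity). -/
/-!
Over ℚ₂, `3x¹⁰ + x² - 4 = (x² - 1) h(x²)` with `h t = 3t⁴ + 3t³ + 3t² + 3t + 4`. Hensel's lemma,
started at `29` and at `2`, gives roots `α ≡ 29` and `β ≡ 2 (mod 16)` in ℤ₂, so `±1, ±α, ±β` are six
distinct roots. Given the two roots `A = α²`, `B = β²` of `h`, any further root `t` of `h` satisfies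
`(2t + 1 + A + B)² = -3A² - 2AB - 3B² - 2A - 2B - 3`; the right side is `8 (mod 16)`, which is not
a square in ℤ₂, hence not in ℚ₂ either.
-/

open Polynomial

namespace PadicInt

variable {p : ℕ} [Fact p.Prime]

theorem toZModPow_eq_of_norm_sub_le {x y : ℤ_[p]} {n k : ℕ} (hnk : n ≤ k)
    (h : ‖x - y‖ ≤ (p : ℝ) ^ (-k : ℤ)) : toZModPow n x = toZModPow n y := by
  rw [← sub_eq_zero, ← map_sub, ← RingHom.mem_ker, ker_toZModPow, ← norm_le_pow_iff_mem_span_pow]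
  exact h.trans (zpow_le_zpow_right₀ (by exact_mod_cast (Fact.out : p.Prime).one_le) (by omega))

-- Sharper than the bound `‖z - a‖ < ‖F' a‖` of `hensels_lemma`, which near `2` would only fix
-- the root modulo `8`.
theorem norm_aeval_eq_mul_norm_sub {R : Type*} [CommSemiring R] [Algebra R ℤ_[p]] {F : R[X]}
    {a z : ℤ_[p]} (hz : F.aeval z = 0) (hza : ‖z - a‖ < ‖F.derivative.aeval a‖) :
    ‖F.aeval a‖ = ‖F.derivative.aeval a‖ * ‖z - a‖ := by
  set G := F.map (algebraMap R ℤ_[p])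
  rw [← eval_map_algebraMap] at hz ⊢
  rw [← eval_map_algebraMap, ← derivative_map] at hza ⊢
  obtain ⟨c, hc⟩ := G.binomExpansion a (z - a)
  rw [add_sub_cancel, hz] at hc
  have hlt : ‖c * (z - a)‖ < ‖G.derivative.eval a‖ :=
    calc ‖c * (z - a)‖ ≤ ‖z - a‖ := by
          rw [norm_mul]; exact mul_le_of_le_one_left (norm_nonneg _) (norm_le_one c)
      _ < _ := hza
  have hnorm : ‖G.derivative.eval a + c * (z - a)‖ = ‖G.derivative.eval a‖ := by
    rw [IsUltrametricDist.norm_add_eq_max_of_norm_ne_norm hlt.ne', max_eq_left hlt.le]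
  rw [show G.eval a = -((G.derivative.eval a + c * (z - a)) * (z - a)) by linear_combination -hc,
    norm_neg, norm_mul, hnorm]

theorem exists_aeval_eq_zero_toZModPow_eq (F : ℤ[X]) (a : ℤ) {m k n : ℕ} (hmk : m < k)
    (hnk : n ≤ k) (hF : (p : ℤ) ^ (m + k) ∣ F.eval a)
    (hF' : ¬ (p : ℤ) ^ (m + 1) ∣ F.derivative.eval a) :
    ∃ z : ℤ_[p], F.aeval z = 0 ∧ toZModPow n z = a := by
  have hcast : ∀ G : ℤ[X], G.aeval (a : ℤ_[p]) = ((G.eval a : ℤ) : ℤ_[p]) := fun G => by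
    simp [aeval_def, eval₂_at_intCast]
  have hp : (1 : ℝ) < p := by exact_mod_cast (Fact.out : p.Prime).one_lt
  have hFa : ‖F.aeval (a : ℤ_[p])‖ ≤ (p : ℝ) ^ (-(m + k : ℕ) : ℤ) := by
    rw [hcast]; exact_mod_cast norm_int_le_pow_iff_dvd.2 hF
  have hF'a : (p : ℝ) ^ (-m : ℤ) ≤ ‖F.derivative.aeval (a : ℤ_[p])‖ := by
    rw [hcast]
    refine le_of_not_gt fun h => hF' ?_
    rw [norm_lt_pow_iff_norm_le_pow_sub_one] at h
    exact_mod_cast norm_int_le_pow_iff_dvd.1 (by convert h using 2; push_cast; ring)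
  have hsplit : (p : ℝ) ^ (-(m + k : ℕ) : ℤ) = (p : ℝ) ^ (-m : ℤ) * (p : ℝ) ^ (-k : ℤ) := by
    rw [← zpow_add₀ (by positivity)]; congr 1; push_cast; ring
  have hnorm : ‖F.aeval (a : ℤ_[p])‖ < ‖F.derivative.aeval (a : ℤ_[p])‖ ^ 2 :=
    calc ‖F.aeval (a : ℤ_[p])‖ ≤ (p : ℝ) ^ (-m : ℤ) * (p : ℝ) ^ (-k : ℤ) := hsplit ▸ hFa
      _ < (p : ℝ) ^ (-m : ℤ) * (p : ℝ) ^ (-m : ℤ) := by gcongr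
      _ ≤ ‖F.derivative.aeval (a : ℤ_[p])‖ ^ 2 := by rw [sq]; gcongr
  obtain ⟨z, hz, hza, -⟩ := hensels_lemma hnorm
  have hza' : ‖z - a‖ ≤ (p : ℝ) ^ (-k : ℤ) := by
    refine le_of_mul_le_mul_left ?_ (by positivity : (0 : ℝ) < (p : ℝ) ^ (-m : ℤ))
    calc (p : ℝ) ^ (-m : ℤ) * ‖z - a‖ ≤ ‖F.derivative.aeval (a : ℤ_[p])‖ * ‖z - a‖ := by gcongr
      _ = ‖F.aeval (a : ℤ_[p])‖ := (norm_aeval_eq_mul_norm_sub hz hza).symm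
      _ ≤ _ := hsplit ▸ hFa
  exact ⟨z, hz, by simpa using toZModPow_eq_of_norm_sub_le hnk hza'⟩

theorem not_isSquare_coe_of_not_isSquare_toZModPow {d : ℤ_[p]} (n : ℕ)
    (h : ¬ IsSquare (toZModPow n d)) : ¬ IsSquare (d : ℚ_[p]) := by
  rintro ⟨y, hy⟩
  have hy1 : ‖y‖ ≤ 1 := by
    have : ‖y‖ * ‖y‖ ≤ 1 := by rw [← norm_mul, ← hy]; exact d.norm_le_one
    nlinarith [norm_nonneg y]
  obtain ⟨z, rfl⟩ : ∃ z : ℤ_[p], (z : ℚ_[p]) = y := ⟨⟨y, hy1⟩, rfl⟩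
  exact h (IsSquare.map _ ⟨z, PadicInt.ext (by rw [hy, PadicInt.coe_mul])⟩)

end PadicInt

section Decic

variable {K : Type*} [Field K]

theorem sq_eq_of_three_roots {A B t : K} (h3 : (3 : K) ≠ 0)
    (hA : 3 * A ^ 4 + 3 * A ^ 3 + 3 * A ^ 2 + 3 * A + 4 = 0)
    (hB : 3 * B ^ 4 + 3 * B ^ 3 + 3 * B ^ 2 + 3 * B + 4 = 0)
    (ht : 3 * t ^ 4 + 3 * t ^ 3 + 3 * t ^ 2 + 3 * t + 4 = 0)
    (hAB : A ≠ B) (htA : t ≠ A) (htB : t ≠ B) :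
    (2 * t + 1 + A + B) ^ 2 = -3 * A ^ 2 - 2 * A * B - 3 * B ^ 2 - 2 * A - 2 * B - 3 := by
  have hq : t ^ 2 + (1 + A + B) * t + (A ^ 2 + A * B + B ^ 2 + A + B + 1) = 0 := by
    -- second divided difference of the quartic at `t, A, B`
    have h : (3 * (t - A) * (t - B) * (A - B)) *
        (t ^ 2 + (1 + A + B) * t + (A ^ 2 + A * B + B ^ 2 + A + B + 1)) = 0 := by
      linear_combination (A - B) * ht - (t - B) * hA + (t - A) * hB
    refine (mul_eq_zero.1 h).resolve_left ?_
    simp only [mul_ne_zero_iff, sub_ne_zero]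
    exact ⟨⟨⟨h3, htA⟩, htB⟩, hAB⟩
  linear_combination 4 * hq

theorem decic_eq_zero_iff_mem {α β : K} (h3 : (3 : K) ≠ 0) (hα : 3 * α ^ 10 + α ^ 2 - 4 = 0)
    (hβ : 3 * β ^ 10 + β ^ 2 - 4 = 0) (hα1 : α ^ 2 ≠ 1) (hβ1 : β ^ 2 ≠ 1) (hαβ : α ^ 2 ≠ β ^ 2)
    (hΔ : ¬ IsSquare (-3 * (α ^ 2) ^ 2 - 2 * α ^ 2 * β ^ 2 - 3 * (β ^ 2) ^ 2 - 2 * α ^ 2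
      - 2 * β ^ 2 - 3)) (x : K) :
    3 * x ^ 10 + x ^ 2 - 4 = 0 ↔ x ∈ [1, -1, α, -α, β, -β] := by
  have hfac (y : K) : 3 * y ^ 10 + y ^ 2 - 4 =
      (y ^ 2 - 1) * (3 * (y ^ 2) ^ 4 + 3 * (y ^ 2) ^ 3 + 3 * (y ^ 2) ^ 2 + 3 * y ^ 2 + 4) := by
    ring
  have hA := (mul_eq_zero.1 ((hfac α).symm.trans hα)).resolve_left (sub_ne_zero.2 hα1)
  have hB := (mul_eq_zero.1 ((hfac β).symm.trans hβ)).resolve_left (sub_ne_zero.2 hβ1)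
  simp only [List.mem_cons, List.not_mem_nil, or_false]
  constructor
  · intro hx
    rw [hfac, mul_eq_zero, sub_eq_zero] at hx
    rcases hx with hx | hx
    · rw [sq_eq_one_iff] at hx
      tauto
    by_cases hxα : x ^ 2 = α ^ 2
    · rw [sq_eq_sq_iff_eq_or_eq_neg] at hxα
      tauto
    by_cases hxβ : x ^ 2 = β ^ 2
    · rw [sq_eq_sq_iff_eq_or_eq_neg] at hxβ
      tauto
    exact absurd ⟨_, (sq_eq_of_three_roots h3 hA hB hx hαβ hxα hxβ).symm.trans (sq _)⟩ hΔ
  · rintro (rfl | rfl | rfl | rfl | rfl | rfl)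
    · norm_num
    · norm_num
    · exact hα
    · linear_combination hα
    · exact hβ
    · linear_combination hβ

theorem ncard_decic_roots_eq_six {α β : K} (h3 : (3 : K) ≠ 0) (hα : 3 * α ^ 10 + α ^ 2 - 4 = 0)
    (hβ : 3 * β ^ 10 + β ^ 2 - 4 = 0) (hL : [1, -1, α, -α, β, -β].Nodup)
    (hΔ : ¬ IsSquare (-3 * (α ^ 2) ^ 2 - 2 * α ^ 2 * β ^ 2 - 3 * (β ^ 2) ^ 2 - 2 * α ^ 2
      - 2 * β ^ 2 - 3)) :
    {x : K | 3 * x ^ 10 + x ^ 2 - 4 = 0}.ncard = 6 := by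
  classical
  have hne := hL
  simp only [List.nodup_cons, List.mem_cons, List.not_mem_nil, or_false, List.nodup_nil] at hne
  have hroots := decic_eq_zero_iff_mem h3 hα hβ (by rw [sq_ne_one_iff]; grind)
    (by rw [sq_ne_one_iff]; grind) (by rw [Ne, sq_eq_sq_iff_eq_or_eq_neg]; grind) hΔ
  have hset : {x : K | 3 * x ^ 10 + x ^ 2 - 4 = 0} = ↑[1, -1, α, -α, β, -β].toFinset := by
    ext x
    simp only [Set.mem_ofPred_eq, hroots, Finset.mem_coe, List.mem_toFinset]
  rw [hset, Set.ncard_coe_finset, List.toFinset_card_of_nodup hL]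
  rfl

end Decic

open PadicInt in
/-- The polynomial `3x¹⁰ + x² - 4` has exactly `6` nonzero roots in `ℚ₂`. -/
theorem stmt12 :
    {x : ℚ_[2] | x ≠ 0 ∧ 3 * x ^ 10 + x ^ 2 - 4 = 0}.ncard = 6 := by
  set F : ℤ[X] := 3 * X ^ 10 + X ^ 2 - 4
  obtain ⟨a, ha, ha16⟩ := exists_aeval_eq_zero_toZModPow_eq (p := 2) F 29 (m := 5) (k := 6)
    (n := 4) (by norm_num) (by norm_num) (by norm_num [F]) (by norm_num [F])
  obtain ⟨b, hb, hb16⟩ := exists_aeval_eq_zero_toZModPow_eq (p := 2) F 2 (m := 2) (k := 4)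
    (n := 4) (by norm_num) le_rfl (by norm_num [F]) (by norm_num [F])
  have hroot {z : ℤ_[2]} (hz : F.aeval z = 0) : 3 * (z : ℚ_[2]) ^ 10 + z ^ 2 - 4 = 0 := by
    have := congrArg (algebraMap ℤ_[2] ℚ_[2]) hz
    rw [← aeval_algebraMap_apply, map_zero, PadicInt.algebraMap_apply] at this
    simpa [F, map_ofNat] using this
  have hL : ([1, -1, (a : ℚ_[2]), -a, b, -b]).Nodup := by
    have := (List.Nodup.of_map (toZModPow 4) (l := [1, -1, a, -a, b, -b])
      (by simp [ha16, hb16]; decide)).map (fun _ _ => PadicInt.ext)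
    simpa using this
  have hΔ := not_isSquare_coe_of_not_isSquare_toZModPow (d := -3 * (a ^ 2) ^ 2
    - 2 * a ^ 2 * b ^ 2 - 3 * (b ^ 2) ^ 2 - 2 * a ^ 2 - 2 * b ^ 2 - 3) 4
    (by simp [ha16, hb16, map_ofNat]; decide)
  push_cast at hΔ
  rw [← ncard_decic_roots_eq_six three_ne_zero (hroot ha) (hroot hb) hL hΔ]
  congr with x
  exact and_iff_right_of_imp (by rintro h rfl; norm_num at h)
end
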